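/- Let k ≥ 2 be an integer, let α ∈ (0,1), let c > 0, let q ∈ P_k be a point of the probability simplex, let Ĩ ∈ {1,…,k} satisfy q_Ĩ = max_{i∈[k]} q_i, set q_* = min{q_Ĩ, 1 − q_Ĩ}, and let a* ∈ {1,…,k} be arbitrary. Define u = (8c/(1−α)) q_*^{1−α} and h = H_α(q). Then u · h ≤ (8 c (k−1)^{1−α} / (α(1−α))) · (1 − q_{a*}). -/
import Mathlib


open Finset

theorem stmt_17 (k : ℕ) (hk : 2 ≤ k) (α : ℝ) (hα : α ∈ Set.Ioo (0 : ℝ) 1)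
    (c : ℝ) (hc : 0 < c)
    (q : Fin k → ℝ) (hq0 : ∀ i, 0 ≤ q i) (hq1 : ∑ i, q i = 1)
    (Itil : Fin k) (hItil : ∀ i, q i ≤ q Itil) (astar : Fin k) :
    (8 * c / (1 - α) * min (q Itil) (1 - q Itil) ^ (1 - α))
      * ((1 / α) * ∑ i, (q i ^ α - q i))
      ≤ 8 * c * ((k : ℝ) - 1) ^ (1 - α) / (α * (1 - α)) * (1 - q astar) := by
  obtain ⟨hα0, hα1⟩ := hα
  have hm0 : (0:ℝ) < (k:ℝ) - 1 := by
    have : (2:ℝ) ≤ (k:ℝ) := by exact_mod_cast hk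
    linarith
  set m : ℝ := (k:ℝ) - 1 with hm
  set s : Finset (Fin k) := Finset.univ.erase Itil with hsdef
  have hcard : (s.card : ℝ) = m := by
    have h1 : s.card = k - 1 := by
      rw [hsdef, Finset.card_erase_of_mem (mem_univ _), Finset.card_univ, Fintype.card_fin]
    have h1k : 1 ≤ k := le_trans (by norm_num) hk
    rw [h1, hm]
    push_cast [Nat.cast_sub h1k]
    ring
  set S : ℝ := 1 - q Itil with hSdef
  have hqI1 : q Itil ≤ 1 := by
    have h := Finset.single_le_sum (f := q) (fun i _ => hq0 i) (mem_univ Itil)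
    rw [hq1] at h; exact h
  have hS0 : 0 ≤ S := by rw [hSdef]; linarith
  have hSsum : ∑ i ∈ s, q i = S := by
    have h := Finset.add_sum_erase Finset.univ q (mem_univ Itil)
    rw [hq1] at h
    rw [hsdef, hSdef]; linarith
  -- power mean inequality
  have hkey : ∑ i ∈ s, q i ^ α ≤ m ^ (1 - α) * S ^ α := by
    have hpm := Real.arith_mean_le_rpow_mean s (fun _ => m⁻¹) (fun i => q i ^ α)
      (fun i _ => by positivity) (by
        rw [Finset.sum_const, nsmul_eq_mul, hcard, mul_inv_cancel₀ (ne_of_gt hm0)])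
      (fun i _ => Real.rpow_nonneg (hq0 i) α) (p := 1/α)
      (by rw [le_div_iff₀ hα0]; linarith)
    simp only [one_div_one_div] at hpm
    have hz : ∑ i ∈ s, m⁻¹ * (q i ^ α) ^ (1/α) = m⁻¹ * S := by
      rw [← hSsum, Finset.mul_sum]
      refine Finset.sum_congr rfl fun i _ => ?_
      rw [← Real.rpow_mul (hq0 i), mul_one_div_cancel (ne_of_gt hα0), Real.rpow_one]
    rw [hz, ← Finset.mul_sum] at hpm
    have hmul : (m⁻¹ * S) ^ α = (m ^ α)⁻¹ * S ^ α := by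
      rw [Real.mul_rpow (by positivity) hS0, Real.inv_rpow hm0.le]
    rw [hmul] at hpm
    have hpow : m ^ (1 - α) = m * (m ^ α)⁻¹ := by
      rw [Real.rpow_sub hm0, Real.rpow_one, div_eq_mul_inv]
    rw [hpow, mul_assoc]
    calc ∑ i ∈ s, q i ^ α = m * (m⁻¹ * ∑ i ∈ s, q i ^ α) := by
          field_simp
      _ ≤ m * ((m ^ α)⁻¹ * S ^ α) := by
          apply mul_le_mul_of_nonneg_left hpm hm0.le
  -- Tsallis sum bound
  have hT : ∑ i, (q i ^ α - q i) ≤ m ^ (1 - α) * S ^ α := by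
    have hsplit : ∑ i, q i ^ α = q Itil ^ α + ∑ i ∈ s, q i ^ α :=
      (Finset.add_sum_erase Finset.univ (fun i => q i ^ α) (mem_univ Itil)).symm
    have hI1 : q Itil ^ α ≤ 1 := Real.rpow_le_one (hq0 _) hqI1 hα0.le
    have : ∑ i, (q i ^ α - q i) = ∑ i, q i ^ α - 1 := by
      rw [Finset.sum_sub_distrib, hq1]
    rw [this, hsplit]
    linarith
  have hT0 : 0 ≤ ∑ i, (q i ^ α - q i) := by
    apply Finset.sum_nonneg
    intro i _
    rcases eq_or_lt_of_le (hq0 i) with h | h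
    · simp [← h, Real.zero_rpow (ne_of_gt hα0)]
    · have hle : q i ≤ 1 := le_trans (hItil i) hqI1
      have := Real.rpow_le_rpow_of_exponent_ge h hle hα1.le
      rw [Real.rpow_one] at this
      linarith
  -- main chain
  set Q : ℝ := min (q Itil) (1 - q Itil) with hQdef
  have hQ0 : 0 ≤ Q := le_min (hq0 _) (by linarith)
  have hQS : Q ≤ S := by rw [hQdef, hSdef]; exact min_le_right _ _
  have hkey2 : Q ^ (1 - α) * ∑ i, (q i ^ α - q i) ≤ m ^ (1 - α) * (1 - q astar) := by
    have h1 : Q ^ (1 - α) * ∑ i, (q i ^ α - q i) ≤ S ^ (1 - α) * ∑ i, (q i ^ α - q i) :=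
      mul_le_mul_of_nonneg_right (Real.rpow_le_rpow hQ0 hQS (by linarith)) hT0
    have h2 : S ^ (1 - α) * ∑ i, (q i ^ α - q i) ≤ S ^ (1 - α) * (m ^ (1 - α) * S ^ α) :=
      mul_le_mul_of_nonneg_left hT (Real.rpow_nonneg hS0 _)
    have h3 : S ^ (1 - α) * (m ^ (1 - α) * S ^ α) = m ^ (1 - α) * S := by
      rw [mul_left_comm]
      congr 1
      rw [← Real.rpow_add' hS0 (by norm_num)]
      norm_num
    have h4 : S ≤ 1 - q astar := by rw [hSdef]; linarith [hItil astar]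
    calc Q ^ (1 - α) * ∑ i, (q i ^ α - q i) ≤ m ^ (1 - α) * S := by
          rw [← h3]; exact le_trans h1 h2
      _ ≤ m ^ (1 - α) * (1 - q astar) :=
          mul_le_mul_of_nonneg_left h4 (Real.rpow_nonneg hm0.le _)
  have heq : (8 * c / (1 - α) * Q ^ (1 - α)) * ((1 / α) * ∑ i, (q i ^ α - q i))
      = (8 * c / (α * (1 - α))) * (Q ^ (1 - α) * ∑ i, (q i ^ α - q i)) := by
    field_simp
  have heq2 : 8 * c * m ^ (1 - α) / (α * (1 - α)) * (1 - q astar)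
      = (8 * c / (α * (1 - α))) * (m ^ (1 - α) * (1 - q astar)) := by
    field_simp
  rw [heq, heq2]
  exact mul_le_mul_of_nonneg_left hkey2 (div_nonneg (by linarith) (by nlinarith))
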